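/- Safety of the inactive sample screening rule ISS (Theorem 10): let α > 0 and β₀ > 0, let w* minimize P(·; α, β₀) over ℝ^p and θ* minimize D(·; α, β₀) over the box [0,1]^n. Let F̂ ⊆ {1, …, p} be such that [w*]_j = 0 for every j ∈ F̂, and set F̂^c = {1, …, p} \ F̂. Suppose c ∈ ℝ^{F̂^c} and r ≥ 0 satisfy ‖[w*]_{F̂^c} − c‖ ≤ r. Then for every i ∈ {1, …, n}: if 1 − ⟨[x̄ᵢ]_{F̂^c}, c⟩ + ‖[x̄ᵢ]_{F̂^c}‖·r < 0 then [θ*]_i = 0, and if 1 − ⟨[x̄ᵢ]_{F̂^c}, c⟩ − ‖[x̄ᵢ]_{F̂^c}‖·r > γ then [θ*]_i = 1. -/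

import Mathlib

open Finset

/-- The smoothed hinge loss. -/
noncomputable def ell (γ t : ℝ) : ℝ :=
  if t < 0 then 0 else if t ≤ γ then t ^ 2 / (2 * γ) else t - γ / 2

/-- Componentwise soft-thresholding operator. -/
noncomputable def softThresh (β u : ℝ) : ℝ :=
  Real.sign u * max (|u| - β) 0

/-- Primal objective P(w; α, β). -/
noncomputable def Pobj {n p : ℕ} (xb : Fin n → Fin p → ℝ) (γ α β : ℝ) (w : Fin p → ℝ) : ℝ :=
  (1 / (n : ℝ)) * ∑ i, ell γ (1 - ∑ j, xb i j * w j)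
    + (α / 2) * ∑ j, w j ^ 2 + β * ∑ j, |w j|

/-- Dual objective D(θ; α, β). -/
noncomputable def Dobj {n p : ℕ} (xb : Fin n → Fin p → ℝ) (γ α β : ℝ) (θ : Fin n → ℝ) : ℝ :=
  (1 / (2 * α)) * ∑ j, softThresh β ((1 / (n : ℝ)) * ∑ i, θ i * xb i j) ^ 2
    + (γ / (2 * (n : ℝ))) * ∑ i, θ i ^ 2 - (1 / (n : ℝ)) * ∑ i, θ i

noncomputable def dell (γ t : ℝ) : ℝ :=
  if t < 0 then 0 else if t ≤ γ then t / γ else 1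

lemma dell_nonneg (γ t : ℝ) (hγ : 0 < γ) : 0 ≤ dell γ t := by
  unfold dell; split_ifs with h1 h2
  · exact le_refl 0
  · exact div_nonneg (by linarith) hγ.le
  · norm_num

lemma dell_le_one (γ t : ℝ) (hγ : 0 < γ) : dell γ t ≤ 1 := by
  unfold dell; split_ifs with h1 h2
  · norm_num
  · rw [div_le_one hγ]; linarith
  · exact le_refl 1

lemma dell_fenchel_eq (γ t : ℝ) (hγ : 0 < γ) :
    dell γ t * t - γ * dell γ t ^ 2 / 2 = ell γ t := by
  have hγ' : γ ≠ 0 := ne_of_gt hγ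
  unfold dell ell; split_ifs with h1 h2
  · ring
  · field_simp; ring
  · ring

lemma ell_fenchel (γ t s : ℝ) (hγ : 0 < γ) (hs0 : 0 ≤ s) (hs1 : s ≤ 1) :
    s * t - γ * s ^ 2 / 2 ≤ ell γ t := by
  have hγ' : γ ≠ 0 := ne_of_gt hγ
  have h2γ : (0:ℝ) < 2 * γ := by linarith
  unfold ell; split_ifs with h1 h2
  · nlinarith
  · rw [← mul_le_mul_iff_right₀ h2γ]; field_simp; nlinarith [sq_nonneg (t - γ * s)]
  · nlinarith [sq_nonneg (1 - s)]

lemma ell_descent (γ a b : ℝ) (hγ : 0 < γ) :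
    ell γ b ≤ ell γ a + dell γ a * (b - a) + (b - a) ^ 2 / (2 * γ) := by
  have hγ' : γ ≠ 0 := ne_of_gt hγ
  have h2γ : (0:ℝ) < 2 * γ := by linarith
  have E : a ^ 2 / (2 * γ) + a / γ * (b - a) + (b - a) ^ 2 / (2 * γ) = b ^ 2 / (2 * γ) := by
    field_simp; ring
  have hD0 : 0 ≤ (b - a) ^ 2 / (2 * γ) := by positivity
  unfold ell dell
  split_ifs with h1 h2 h3 h4 h5 h6 h7 h8
  · linarith
  · rw [E]; positivity
  · have h : (γ - b) ^ 2 ≤ (b - a) ^ 2 := by nlinarith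
    have h' : (γ - b) ^ 2 / (2 * γ) ≤ (b - a) ^ 2 / (2 * γ) := (div_le_div_iff_of_pos_right h2γ).mpr h
    have h'' : γ / 2 - b ≤ (γ - b) ^ 2 / (2 * γ) := by
      rw [le_div_iff₀ h2γ]; nlinarith [sq_nonneg b]
    linarith
  · have h : b ^ 2 ≤ (b - a) ^ 2 := by nlinarith
    have h' : b ^ 2 / (2 * γ) ≤ (b - a) ^ 2 / (2 * γ) := (div_le_div_iff_of_pos_right h2γ).mpr h
    linarith
  · rw [E]
  · have h : (b - γ) ^ 2 ≤ (b - a) ^ 2 := by nlinarith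
    have h' : (b - γ) ^ 2 / (2 * γ) ≤ (b - a) ^ 2 / (2 * γ) := (div_le_div_iff_of_pos_right h2γ).mpr h
    have h'' : (b - γ) ^ 2 / (2 * γ) = b ^ 2 / (2 * γ) - b + γ / 2 := by field_simp; ring
    linarith
  · have h : b ^ 2 ≤ (b - a) ^ 2 := by nlinarith
    have h' : b ^ 2 / (2 * γ) ≤ (b - a) ^ 2 / (2 * γ) := (div_le_div_iff_of_pos_right h2γ).mpr h
    have h'' : b - γ / 2 ≤ b ^ 2 / (2 * γ) := by rw [le_div_iff₀ h2γ]; nlinarith [sq_nonneg (b - γ)]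
    linarith
  · rw [E, le_div_iff₀ h2γ]; nlinarith [sq_nonneg (b - γ)]
  · linarith

lemma softThresh_sq (β u : ℝ) (hβ : 0 ≤ β) :
    softThresh β u ^ 2 = max (|u| - β) 0 ^ 2 := by
  unfold softThresh
  rcases lt_trichotomy u 0 with h | h | h
  · rw [Real.sign_of_neg h]; ring
  · subst h; norm_num [max_eq_right (neg_nonpos.mpr hβ)]
  · rw [Real.sign_of_pos h]; ring

lemma softThresh_mul (β u : ℝ) :
    u * softThresh β u = |u| * max (|u| - β) 0 := by
  unfold softThresh
  rcases lt_trichotomy u 0 with h | h | h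
  · rw [Real.sign_of_neg h, abs_of_neg h]; ring
  · subst h; simp
  · rw [Real.sign_of_pos h, abs_of_pos h]; ring

lemma softThresh_abs (β u : ℝ) (hβ : 0 ≤ β) :
    |softThresh β u| = max (|u| - β) 0 := by
  unfold softThresh
  rcases lt_trichotomy u 0 with h | h | h
  · rw [Real.sign_of_neg h, abs_mul]
    norm_num [abs_of_nonneg (le_max_right (|u| - β) (0:ℝ))]
  · subst h; norm_num [max_eq_right (neg_nonpos.mpr hβ)]
  · rw [Real.sign_of_pos h, abs_mul]
    norm_num [abs_of_nonneg (le_max_right (|u| - β) (0:ℝ))]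

lemma conj_ineq (α β u v : ℝ) (hα : 0 < α) (hβ : 0 ≤ β) :
    u * v - α / 2 * v ^ 2 - β * |v| ≤ softThresh β u ^ 2 / (2 * α) := by
  rw [softThresh_sq β u hβ, le_div_iff₀ (by linarith : (0:ℝ) < 2 * α)]
  set m : ℝ := max (|u| - β) 0 with hm
  have hm0 : 0 ≤ m := le_max_right _ _
  have hm1 : |u| - β ≤ m := le_max_left _ _
  have h1 : u * v ≤ |u| * |v| := by rw [← abs_mul]; exact le_abs_self _
  have h2 : 0 ≤ |v| := abs_nonneg v
  have hA : 2 * α * (u * v) ≤ 2 * α * (|u| * |v|) :=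
    mul_le_mul_of_nonneg_left h1 (by linarith)
  have hB : 2 * α * (|v| * (|u| - β)) ≤ 2 * α * (|v| * m) :=
    mul_le_mul_of_nonneg_left (mul_le_mul_of_nonneg_left hm1 h2) (by linarith)
  have habs2 : α ^ 2 * |v| ^ 2 = α ^ 2 * v ^ 2 := by rw [sq_abs]
  nlinarith [hA, hB, sq_nonneg (m - α * |v|), habs2]

lemma conj_eq (α β u : ℝ) (hα : 0 < α) (hβ : 0 ≤ β) :
    u * (softThresh β u / α) - α / 2 * (softThresh β u / α) ^ 2 - β * |softThresh β u / α|
      = softThresh β u ^ 2 / (2 * α) := by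
  have hα' : α ≠ 0 := ne_of_gt hα
  rw [abs_div, abs_of_pos hα, softThresh_abs β u hβ]
  set m : ℝ := max (|u| - β) 0 with hm
  have h1 : softThresh β u ^ 2 = m ^ 2 := softThresh_sq β u hβ
  have key : |u| * m = m ^ 2 + β * m := by
    rcases le_or_gt (|u| - β) 0 with h | h
    · rw [hm, max_eq_right h]; ring
    · rw [hm, max_eq_left h.le]; ring
  have hs : u * softThresh β u = m ^ 2 + β * m := by rw [softThresh_mul β u, key]
  rw [← mul_div_assoc, hs, div_pow, h1]
  field_simp
  ring

lemma softThresh_sq_midpoint (β a b : ℝ) (hβ : 0 ≤ β) :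
    softThresh β ((a + b) / 2) ^ 2 ≤ (softThresh β a ^ 2 + softThresh β b ^ 2) / 2 := by
  rw [softThresh_sq β _ hβ, softThresh_sq β _ hβ, softThresh_sq β _ hβ]
  set ma : ℝ := max (|a| - β) 0 with hma
  set mb : ℝ := max (|b| - β) 0 with hmb
  have hma0 : 0 ≤ ma := le_max_right _ _
  have hmb0 : 0 ≤ mb := le_max_right _ _
  have hma1 : |a| - β ≤ ma := le_max_left _ _
  have hmb1 : |b| - β ≤ mb := le_max_left _ _
  have habs : |(a + b) / 2| ≤ (|a| + |b|) / 2 := by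
    rw [abs_div, abs_two]
    exact (div_le_div_iff_of_pos_right (by norm_num : (0:ℝ) < 2)).mpr (abs_add_le a b)
  have hmm0 : (0:ℝ) ≤ max (|(a + b) / 2| - β) 0 := le_max_right _ _
  have hmid : max (|(a + b) / 2| - β) 0 ≤ (ma + mb) / 2 := by
    apply max_le
    · linarith
    · linarith
  nlinarith [mul_self_le_mul_self hmm0 hmid, sq_nonneg (ma - mb)]

lemma nonpos_of_forall_le_mul (c K : ℝ) (hK : 0 ≤ K)
    (h : ∀ t : ℝ, 0 < t → t ≤ 1 → c ≤ t * K) : c ≤ 0 := by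
  by_contra hc
  push_neg at hc
  have h2K : (0:ℝ) < 2 * K + 1 := by linarith
  have hspos : 0 < c / (2 * K + 1) := div_pos hc h2K
  set t : ℝ := min 1 (c / (2 * K + 1)) with ht
  have htpos : 0 < t := lt_min one_pos hspos
  have ht1 : t ≤ 1 := min_le_left _ _
  have := h t htpos ht1
  have h2 : t * K ≤ (c / (2 * K + 1)) * K :=
    mul_le_mul_of_nonneg_right (min_le_right _ _) hK
  have h3 : (c / (2 * K + 1)) * K < c := by
    rw [div_mul_eq_mul_div, div_lt_iff₀ h2K]
    nlinarith
  linarith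

lemma abs_sum_le_sqrt {ι : Type*} (s : Finset ι) (f g : ι → ℝ) :
    |∑ k ∈ s, f k * g k| ≤ Real.sqrt (∑ k ∈ s, f k ^ 2) * Real.sqrt (∑ k ∈ s, g k ^ 2) := by
  rw [← Real.sqrt_mul (by positivity), ← Real.sqrt_sq_eq_abs]
  exact Real.sqrt_le_sqrt (Finset.sum_mul_sq_le_sq_mul_sq s f g)

lemma exchange {n p : ℕ} (xb : Fin n → Fin p → ℝ) (θ : Fin n → ℝ) (w : Fin p → ℝ) :
    ∑ i, θ i * ∑ j, xb i j * w j = ∑ j, (∑ i, θ i * xb i j) * w j := by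
  simp_rw [Finset.mul_sum, Finset.sum_mul]
  rw [Finset.sum_comm]
  apply Finset.sum_congr rfl
  intro j _
  apply Finset.sum_congr rfl
  intro i _
  ring

lemma sum_lin {n p : ℕ} (xb : Fin n → Fin p → ℝ) (θ : Fin n → ℝ) (wstar : Fin p → ℝ)
    (γ : ℝ) (hn : ((n:ℕ) : ℝ) ≠ 0) :
    ∑ i, (θ i * (1 - ∑ k, xb i k * wstar k) - γ * θ i ^ 2 / 2)
      = ∑ i, θ i - (n : ℝ) * ∑ k, ((1 / (n : ℝ)) * ∑ i, θ i * xb i k) * wstar k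
        - γ / 2 * ∑ i, θ i ^ 2 := by
  rw [Finset.sum_sub_distrib]
  have e1 : ∑ i, θ i * (1 - ∑ k, xb i k * wstar k)
      = ∑ i, θ i - ∑ i, θ i * ∑ k, xb i k * wstar k := by
    rw [← Finset.sum_sub_distrib]
    apply Finset.sum_congr rfl; intro i _; ring
  have e3 : (n : ℝ) * ∑ k, ((1 / (n : ℝ)) * ∑ i, θ i * xb i k) * wstar k
      = ∑ k, (∑ i, θ i * xb i k) * wstar k := by
    rw [Finset.mul_sum]
    apply Finset.sum_congr rfl; intro k _
    field_simp
  have e4 : ∑ i, γ * θ i ^ 2 / 2 = γ / 2 * ∑ i, θ i ^ 2 := by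
    rw [Finset.mul_sum]
    apply Finset.sum_congr rfl; intro i _; ring
  rw [e1, e3, e4, exchange xb θ wstar]

lemma ISS_sum_if {p : ℕ} (j : Fin p) (g h : Fin p → ℝ) :
    ∑ k, (if k = j then g k else h k) = ∑ k, h k + (g j - h j) := by
  have e : ∀ k : Fin p, (if k = j then g k else h k)
      = h k + (if k = j then g k - h k else 0) := by
    intro k; split_ifs with hk
    · ring
    · ring
  rw [Finset.sum_congr rfl (fun k _ => e k), Finset.sum_add_distrib,
    Finset.sum_ite_eq' Finset.univ j (fun k => g k - h k)]
  simp

set_option maxHeartbeats 2000000 in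
theorem ISS_safe {n p : ℕ} (hn : 0 < n) (hp : 0 < p)
    (xb : Fin n → Fin p → ℝ) (γ : ℝ) (hγ0 : 0 < γ) (hγ1 : γ < 1)
    (α β₀ : ℝ) (hα : 0 < α) (hβ₀ : 0 < β₀)
    (wstar : Fin p → ℝ) (θstar : Fin n → ℝ)
    (hw : ∀ w, Pobj xb γ α β₀ wstar ≤ Pobj xb γ α β₀ w)
    (hθbox : ∀ i, 0 ≤ θstar i ∧ θstar i ≤ 1)
    (hθ : ∀ θ : Fin n → ℝ, (∀ i, 0 ≤ θ i ∧ θ i ≤ 1) →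
      Dobj xb γ α β₀ θstar ≤ Dobj xb γ α β₀ θ)
    (F : Finset (Fin p)) (hF : ∀ j ∈ F, wstar j = 0)
    (c : Fin p → ℝ) (r : ℝ) (hr : 0 ≤ r)
    (hball : Real.sqrt (∑ j ∈ Fᶜ, (wstar j - c j) ^ 2) ≤ r) :
    ∀ i, (1 - ∑ j ∈ Fᶜ, xb i j * c j + Real.sqrt (∑ j ∈ Fᶜ, xb i j ^ 2) * r < 0 →
        θstar i = 0) ∧
      (1 - ∑ j ∈ Fᶜ, xb i j * c j - Real.sqrt (∑ j ∈ Fᶜ, xb i j ^ 2) * r > γ →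
        θstar i = 1) := by
  have hNpos : (0:ℝ) < (n:ℝ) := by exact_mod_cast hn
  have hn' : ((n:ℕ) : ℝ) ≠ 0 := ne_of_gt hNpos
  set θh : Fin n → ℝ := fun i => dell γ (1 - ∑ k, xb i k * wstar k) with hθh
  set u : Fin p → ℝ := fun k => (1 / (n : ℝ)) * ∑ i, θh i * xb i k with hu
  have hθhi : ∀ i, θh i = dell γ (1 - ∑ k, xb i k * wstar k) := fun i => by rw [hθh]
  have hui : ∀ k, u k = (1 / (n : ℝ)) * ∑ i, θh i * xb i k := fun k => by rw [hu]
  have hθhbox : ∀ i, 0 ≤ θh i ∧ θh i ≤ 1 := by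
    intro i
    rw [hθhi i]
    exact ⟨dell_nonneg _ _ hγ0, dell_le_one _ _ hγ0⟩
  -- key subgradient inequality
  have hsub : ∀ (j : Fin p) (y : ℝ),
      (u j - α * wstar j) * (y - wstar j) ≤ β₀ * (|y| - |wstar j|) := by
    intro j y
    set δ : ℝ := y - wstar j with hδ
    have hSxx : (0:ℝ) ≤ ∑ i, xb i j ^ 2 := Finset.sum_nonneg (fun i _ => sq_nonneg _)
    set K : ℝ := δ ^ 2 * ((1 / (2 * γ * (n:ℝ))) * ∑ i, xb i j ^ 2 + α / 2) with hK
    have hK0 : 0 ≤ K := by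
      rw [hK]
      have h1 : (0:ℝ) ≤ (1 / (2 * γ * (n:ℝ))) * ∑ i, xb i j ^ 2 := by positivity
      have h2 : (0:ℝ) ≤ (1 / (2 * γ * (n:ℝ))) * (∑ i, xb i j ^ 2) + α / 2 := by linarith
      exact mul_nonneg (sq_nonneg δ) h2
    have key : ∀ t : ℝ, 0 < t → t ≤ 1 →
        (u j - α * wstar j) * δ - β₀ * (|y| - |wstar j|) ≤ t * K := by
      intro t ht ht1
      set v : ℝ := wstar j + t * δ with hv
      set w' : Fin p → ℝ := fun k => if k = j then v else wstar k with hw'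
      have hP := hw w'
      have h1 : ∀ i', ∑ k, xb i' k * w' k = ∑ k, xb i' k * wstar k + xb i' j * (t * δ) := by
        intro i'
        have e : ∀ k : Fin p, xb i' k * w' k
            = (if k = j then xb i' k * v else xb i' k * wstar k) := by
          intro k; simp only [hw']; split_ifs <;> rfl
        rw [Finset.sum_congr rfl (fun k _ => e k),
          ISS_sum_if j (fun k => xb i' k * v) (fun k => xb i' k * wstar k)]
        rw [hv]; ring
      have h2 : ∑ k, w' k ^ 2 = ∑ k, wstar k ^ 2 + (v ^ 2 - wstar j ^ 2) := by
        have e : ∀ k : Fin p, w' k ^ 2 = (if k = j then v ^ 2 else wstar k ^ 2) := by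
          intro k; simp only [hw']; split_ifs <;> rfl
        rw [Finset.sum_congr rfl (fun k _ => e k),
          ISS_sum_if j (fun _ => v ^ 2) (fun k => wstar k ^ 2)]
      have h3 : ∑ k, |w' k| = ∑ k, |wstar k| + (|v| - |wstar j|) := by
        have e : ∀ k : Fin p, |w' k| = (if k = j then |v| else |wstar k|) := by
          intro k; simp only [hw']; split_ifs <;> rfl
        rw [Finset.sum_congr rfl (fun k _ => e k),
          ISS_sum_if j (fun _ => |v|) (fun k => |wstar k|)]
      have hloss : ∑ i', ell γ (1 - ∑ k, xb i' k * w' k)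
          ≤ ∑ i', ell γ (1 - ∑ k, xb i' k * wstar k)
            + (-(t * δ)) * (∑ i', θh i' * xb i' j)
            + ((t * δ) ^ 2 / (2 * γ)) * ∑ i', xb i' j ^ 2 := by
        have hb : ∀ i', ell γ (1 - ∑ k, xb i' k * w' k)
            ≤ ell γ (1 - ∑ k, xb i' k * wstar k)
              + θh i' * (-(xb i' j * (t * δ)))
              + (xb i' j * (t * δ)) ^ 2 / (2 * γ) := by
          intro i'
          rw [h1 i']
          have hd := ell_descent γ (1 - ∑ k, xb i' k * wstar k)
            ((1 - ∑ k, xb i' k * wstar k) - xb i' j * (t * δ)) hγ0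
          rw [hθhi i']
          have e : (1 - (∑ k, xb i' k * wstar k + xb i' j * (t * δ)))
              = (1 - ∑ k, xb i' k * wstar k) - xb i' j * (t * δ) := by ring
          rw [e]
          calc ell γ ((1 - ∑ k, xb i' k * wstar k) - xb i' j * (t * δ))
              ≤ ell γ (1 - ∑ k, xb i' k * wstar k)
                + dell γ (1 - ∑ k, xb i' k * wstar k)
                  * (((1 - ∑ k, xb i' k * wstar k) - xb i' j * (t * δ))
                      - (1 - ∑ k, xb i' k * wstar k))
                + (((1 - ∑ k, xb i' k * wstar k) - xb i' j * (t * δ))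
                      - (1 - ∑ k, xb i' k * wstar k)) ^ 2 / (2 * γ) := hd
            _ = ell γ (1 - ∑ k, xb i' k * wstar k)
                + dell γ (1 - ∑ k, xb i' k * wstar k) * (-(xb i' j * (t * δ)))
                + (xb i' j * (t * δ)) ^ 2 / (2 * γ) := by ring
        calc ∑ i', ell γ (1 - ∑ k, xb i' k * w' k)
            ≤ ∑ i', (ell γ (1 - ∑ k, xb i' k * wstar k)
              + θh i' * (-(xb i' j * (t * δ)))
              + (xb i' j * (t * δ)) ^ 2 / (2 * γ)) := Finset.sum_le_sum (fun i' _ => hb i')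
          _ = ∑ i', ell γ (1 - ∑ k, xb i' k * wstar k)
              + (-(t * δ)) * (∑ i', θh i' * xb i' j)
              + ((t * δ) ^ 2 / (2 * γ)) * ∑ i', xb i' j ^ 2 := by
            rw [Finset.sum_add_distrib, Finset.sum_add_distrib, Finset.mul_sum, Finset.mul_sum]
            congr 1
            · congr 1
              apply Finset.sum_congr rfl; intro i' _; ring
            · apply Finset.sum_congr rfl; intro i' _; ring
      -- assemble the primal bound
      have hmul : (1 / (n:ℝ)) * ∑ i', ell γ (1 - ∑ k, xb i' k * w' k)
          ≤ (1 / (n:ℝ)) * (∑ i', ell γ (1 - ∑ k, xb i' k * wstar k)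
            + (-(t * δ)) * (∑ i', θh i' * xb i' j)
            + ((t * δ) ^ 2 / (2 * γ)) * ∑ i', xb i' j ^ 2) :=
        mul_le_mul_of_nonneg_left hloss (by positivity)
      have habsv : |v| ≤ (1 - t) * |wstar j| + t * |y| := by
        have e : v = (1 - t) * wstar j + t * y := by rw [hv, hδ]; ring
        rw [e]
        calc |(1 - t) * wstar j + t * y| ≤ |(1 - t) * wstar j| + |t * y| := abs_add_le _ _
          _ = (1 - t) * |wstar j| + t * |y| := by
            rw [abs_mul, abs_mul, abs_of_nonneg (by linarith : (0:ℝ) ≤ 1 - t),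
              abs_of_nonneg ht.le]
      have hPexp : 0 ≤ (1 / (n:ℝ)) * ((-(t * δ)) * (∑ i', θh i' * xb i' j)
            + ((t * δ) ^ 2 / (2 * γ)) * ∑ i', xb i' j ^ 2)
          + α / 2 * (v ^ 2 - wstar j ^ 2) + β₀ * (|v| - |wstar j|) := by
        have hPw' : Pobj xb γ α β₀ w' = (1 / (n:ℝ)) * ∑ i', ell γ (1 - ∑ k, xb i' k * w' k)
            + α / 2 * (∑ k, wstar k ^ 2 + (v ^ 2 - wstar j ^ 2))
            + β₀ * (∑ k, |wstar k| + (|v| - |wstar j|)) := by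
          unfold Pobj; rw [h2, h3]
        have hPw : Pobj xb γ α β₀ wstar = (1 / (n:ℝ)) * ∑ i', ell γ (1 - ∑ k, xb i' k * wstar k)
            + α / 2 * ∑ k, wstar k ^ 2 + β₀ * ∑ k, |wstar k| := rfl
        rw [hPw', hPw] at hP
        linarith [hmul, hP]
      have hβabs : β₀ * (|v| - |wstar j|) ≤ β₀ * (t * (|y| - |wstar j|)) := by
        apply mul_le_mul_of_nonneg_left _ hβ₀.le
        linarith [habsv]
      have huj : (1 / (n:ℝ)) * (∑ i', θh i' * xb i' j) = u j := (hui j).symm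
      have hE : 0 ≤ t * (-(u j - α * wstar j) * δ + β₀ * (|y| - |wstar j|)) + t ^ 2 * K := by
        have expand : (1 / (n:ℝ)) * ((-(t * δ)) * (∑ i', θh i' * xb i' j)
              + ((t * δ) ^ 2 / (2 * γ)) * ∑ i', xb i' j ^ 2)
            = -(t * δ) * u j + t ^ 2 * (δ ^ 2 * ((1 / (2 * γ * (n:ℝ))) * ∑ i', xb i' j ^ 2)) := by
          rw [← huj]; field_simp
        rw [hK]
        rw [hv] at hPexp
        linarith [hPexp, hβabs, expand]
      have hE' : 0 ≤ -(u j - α * wstar j) * δ + β₀ * (|y| - |wstar j|) + t * K := by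
        have h0 : 0 ≤ t * ((-(u j - α * wstar j) * δ + β₀ * (|y| - |wstar j|)) + t * K) := by
          linarith [hE]
        have := div_nonneg h0 ht.le
        rwa [mul_div_cancel_left₀ _ (ne_of_gt ht)] at this
      linarith
    have := nonpos_of_forall_le_mul
      ((u j - α * wstar j) * δ - β₀ * (|y| - |wstar j|)) K hK0 key
    linarith

  -- per-coordinate optimality of wstar for the conjugate problem
  have hφ : ∀ k, u k * wstar k - α / 2 * wstar k ^ 2 - β₀ * |wstar k|
      = softThresh β₀ (u k) ^ 2 / (2 * α) := by
    intro k
    have hle := conj_ineq α β₀ (u k) (wstar k) hα hβ₀.le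
    have heq := conj_eq α β₀ (u k) hα hβ₀.le
    have h2 := hsub k (softThresh β₀ (u k) / α)
    have hge : u k * (softThresh β₀ (u k) / α) - α / 2 * (softThresh β₀ (u k) / α) ^ 2
        - β₀ * |softThresh β₀ (u k) / α|
        ≤ u k * wstar k - α / 2 * wstar k ^ 2 - β₀ * |wstar k| := by
      nlinarith [mul_nonneg hα.le (sq_nonneg (softThresh β₀ (u k) / α - wstar k))]
    rw [heq] at hge
    linarith
  have e5 : ∑ k, softThresh β₀ ((1 / (n:ℝ)) * ∑ i, θh i * xb i k) ^ 2
      = ∑ k, softThresh β₀ (u k) ^ 2 := by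
    apply Finset.sum_congr rfl; intro k _; rw [← hui k]
  have hEA : ∑ i, ell γ (1 - ∑ k, xb i k * wstar k)
      = ∑ i, θh i - (n:ℝ) * ∑ k, u k * wstar k - γ / 2 * ∑ i, θh i ^ 2 := by
    have e : ∀ i, ell γ (1 - ∑ k, xb i k * wstar k)
        = θh i * (1 - ∑ k, xb i k * wstar k) - γ * θh i ^ 2 / 2 := by
      intro i; rw [hθhi i]; exact (dell_fenchel_eq γ _ hγ0).symm
    rw [Finset.sum_congr rfl (fun i _ => e i), sum_lin xb θh wstar γ hn']
  have hEC : ∑ k, u k * wstar k = (1 / (2 * α)) * ∑ k, softThresh β₀ (u k) ^ 2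
      + α / 2 * ∑ k, wstar k ^ 2 + β₀ * ∑ k, |wstar k| := by
    have e : ∀ k, u k * wstar k
        = softThresh β₀ (u k) ^ 2 / (2 * α) + α / 2 * wstar k ^ 2 + β₀ * |wstar k| := by
      intro k; have := hφ k; linarith
    rw [Finset.sum_congr rfl (fun k _ => e k), Finset.sum_add_distrib, Finset.sum_add_distrib,
      Finset.mul_sum, Finset.mul_sum, Finset.mul_sum]
    congr 1
    congr 1
    apply Finset.sum_congr rfl; intro k _; ring
  have hPD : Pobj xb γ α β₀ wstar + Dobj xb γ α β₀ θh = 0 := by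
    simp only [Pobj, Dobj]
    rw [hEA, e5, hEC]
    field_simp
    ring
  have hWD : ∀ θ : Fin n → ℝ, (∀ i, 0 ≤ θ i ∧ θ i ≤ 1) →
      0 ≤ Pobj xb γ α β₀ wstar + Dobj xb γ α β₀ θ := by
    intro θ hbox
    have hA : ∀ i, θ i * (1 - ∑ k, xb i k * wstar k) - γ * θ i ^ 2 / 2
        ≤ ell γ (1 - ∑ k, xb i k * wstar k) :=
      fun i => ell_fenchel γ _ (θ i) hγ0 (hbox i).1 (hbox i).2
    have hA' : ∑ i, θ i - (n:ℝ) * ∑ k, ((1 / (n:ℝ)) * ∑ i, θ i * xb i k) * wstar k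
        - γ / 2 * ∑ i, θ i ^ 2 ≤ ∑ i, ell γ (1 - ∑ k, xb i k * wstar k) := by
      rw [← sum_lin xb θ wstar γ hn']
      exact Finset.sum_le_sum (fun i _ => hA i)
    have hA'' := mul_le_mul_of_nonneg_left hA' (by positivity : (0:ℝ) ≤ 1 / (n:ℝ))
    have eq1 : (1 / (n:ℝ)) * (∑ i, θ i
          - (n:ℝ) * ∑ k, ((1 / (n:ℝ)) * ∑ i, θ i * xb i k) * wstar k
          - γ / 2 * ∑ i, θ i ^ 2)
        = (1 / (n:ℝ)) * ∑ i, θ i - ∑ k, ((1 / (n:ℝ)) * ∑ i, θ i * xb i k) * wstar k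
          - γ / (2 * (n:ℝ)) * ∑ i, θ i ^ 2 := by
      field_simp
    rw [eq1] at hA''
    have hB : ∀ k : Fin p, ((1 / (n:ℝ)) * ∑ i, θ i * xb i k) * wstar k
        - α / 2 * wstar k ^ 2 - β₀ * |wstar k|
        ≤ softThresh β₀ ((1 / (n:ℝ)) * ∑ i, θ i * xb i k) ^ 2 / (2 * α) :=
      fun k => conj_ineq α β₀ _ _ hα hβ₀.le
    have hB0 : ∑ k, (((1 / (n:ℝ)) * ∑ i, θ i * xb i k) * wstar k
          - α / 2 * wstar k ^ 2 - β₀ * |wstar k|)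
        ≤ ∑ k, softThresh β₀ ((1 / (n:ℝ)) * ∑ i, θ i * xb i k) ^ 2 / (2 * α) :=
      Finset.sum_le_sum (fun k _ => hB k)
    have eL : ∑ k, (((1 / (n:ℝ)) * ∑ i, θ i * xb i k) * wstar k
          - α / 2 * wstar k ^ 2 - β₀ * |wstar k|)
        = ∑ k, ((1 / (n:ℝ)) * ∑ i, θ i * xb i k) * wstar k
          - α / 2 * ∑ k, wstar k ^ 2 - β₀ * ∑ k, |wstar k| := by
      rw [Finset.sum_sub_distrib, Finset.sum_sub_distrib, Finset.mul_sum, Finset.mul_sum]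
    have eR : ∑ k, softThresh β₀ ((1 / (n:ℝ)) * ∑ i, θ i * xb i k) ^ 2 / (2 * α)
        = (1 / (2 * α)) * ∑ k, softThresh β₀ ((1 / (n:ℝ)) * ∑ i, θ i * xb i k) ^ 2 := by
      rw [Finset.mul_sum]
      apply Finset.sum_congr rfl; intro k _; ring
    rw [eL, eR] at hB0
    simp only [Pobj, Dobj]
    linarith [hA'', hB0]
  have hθeq : ∀ i, θstar i = θh i := by
    have hDle : Dobj xb γ α β₀ θstar ≤ Dobj xb γ α β₀ θh := hθ θh hθhbox
    have hDge : Dobj xb γ α β₀ θh ≤ Dobj xb γ α β₀ θstar := by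
      have := hWD θstar hθbox; linarith
    have hDeq : Dobj xb γ α β₀ θh = Dobj xb γ α β₀ θstar := le_antisymm hDge hDle
    set θm : Fin n → ℝ := fun i => (θstar i + θh i) / 2 with hθm
    have hmbox : ∀ i, 0 ≤ θm i ∧ θm i ≤ 1 := by
      intro i; have h1 := hθbox i; have h2 := hθhbox i
      constructor
      · simp only [hθm]; linarith [h1.1, h2.1]
      · simp only [hθm]; linarith [h1.2, h2.2]
    have hm1 : Dobj xb γ α β₀ θstar ≤ Dobj xb γ α β₀ θm := hθ θm hmbox
    have hm2 : Dobj xb γ α β₀ θm ≤ (Dobj xb γ α β₀ θstar + Dobj xb γ α β₀ θh) / 2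
        - γ / (2 * (n:ℝ)) * (∑ i, (θstar i - θh i) ^ 2) / 4 := by
      have t1 : ∀ k : Fin p, (1 / (n:ℝ)) * ∑ i, θm i * xb i k
          = (((1 / (n:ℝ)) * ∑ i, θstar i * xb i k) + ((1 / (n:ℝ)) * ∑ i, θh i * xb i k)) / 2 := by
        intro k
        have e : ∀ i : Fin n, θm i * xb i k = (θstar i * xb i k + θh i * xb i k) / 2 := by
          intro i; simp only [hθm]; ring
        rw [Finset.sum_congr rfl (fun i _ => e i), ← Finset.sum_div, Finset.sum_add_distrib]
        ring
      have t2 : ∑ k, softThresh β₀ ((1 / (n:ℝ)) * ∑ i, θm i * xb i k) ^ 2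
          ≤ ((∑ k, softThresh β₀ ((1 / (n:ℝ)) * ∑ i, θstar i * xb i k) ^ 2)
            + ∑ k, softThresh β₀ ((1 / (n:ℝ)) * ∑ i, θh i * xb i k) ^ 2) / 2 := by
        calc ∑ k, softThresh β₀ ((1 / (n:ℝ)) * ∑ i, θm i * xb i k) ^ 2
            ≤ ∑ k, (softThresh β₀ ((1 / (n:ℝ)) * ∑ i, θstar i * xb i k) ^ 2
              + softThresh β₀ ((1 / (n:ℝ)) * ∑ i, θh i * xb i k) ^ 2) / 2 := by
              apply Finset.sum_le_sum; intro k _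
              rw [t1 k]
              exact softThresh_sq_midpoint β₀ _ _ hβ₀.le
          _ = _ := by rw [← Finset.sum_div, Finset.sum_add_distrib]
      have t3 : ∑ i, θm i ^ 2
          = ((∑ i, θstar i ^ 2) + ∑ i, θh i ^ 2) / 2 - (∑ i, (θstar i - θh i) ^ 2) / 4 := by
        have e : ∀ i : Fin n, θm i ^ 2
            = (θstar i ^ 2 + θh i ^ 2) / 2 - (θstar i - θh i) ^ 2 / 4 := by
          intro i; simp only [hθm]; ring
        rw [Finset.sum_congr rfl (fun i _ => e i), Finset.sum_sub_distrib, ← Finset.sum_div,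
          ← Finset.sum_div, Finset.sum_add_distrib]
      have t4 : ∑ i, θm i = ((∑ i, θstar i) + ∑ i, θh i) / 2 := by
        have e : ∀ i : Fin n, θm i = (θstar i + θh i) / 2 := fun i => by simp only [hθm]
        rw [Finset.sum_congr rfl (fun i _ => e i), ← Finset.sum_div, Finset.sum_add_distrib]
      have hmul2 := mul_le_mul_of_nonneg_left t2 (by positivity : (0:ℝ) ≤ 1 / (2 * α))
      simp only [Dobj]
      rw [t3, t4]
      linarith [hmul2]
    have hQ : ∑ i, (θstar i - θh i) ^ 2 ≤ 0 := by
      have hpos : (0:ℝ) < γ / (2 * (n:ℝ)) := by positivity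
      by_contra hq
      push_neg at hq
      linarith [hm1, hm2, hDeq, mul_pos hpos hq]
    have hQ0 : ∑ i, (θstar i - θh i) ^ 2 = 0 :=
      le_antisymm hQ (Finset.sum_nonneg (fun i _ => sq_nonneg _))
    intro i
    have hz := (Finset.sum_eq_zero_iff_of_nonneg
      (fun i _ => sq_nonneg (θstar i - θh i))).mp hQ0 i (Finset.mem_univ i)
    have h0 : θstar i - θh i = 0 := by
      exact pow_eq_zero_iff (by norm_num) |>.mp hz
    linarith
  -- conclusion
  intro i
  have hsplit : ∑ k, xb i k * wstar k = ∑ k ∈ Fᶜ, xb i k * wstar k := by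
    rw [← Finset.sum_add_sum_compl F (fun k => xb i k * wstar k)]
    rw [Finset.sum_eq_zero (fun k hk => by rw [hF k hk, mul_zero]), zero_add]
  have hθi : θstar i = dell γ (1 - ∑ k ∈ Fᶜ, xb i k * wstar k) := by
    rw [hθeq i, hθhi i, hsplit]
  have hdiff : ∑ k ∈ Fᶜ, xb i k * wstar k
      = ∑ k ∈ Fᶜ, xb i k * c k + ∑ k ∈ Fᶜ, xb i k * (wstar k - c k) := by
    rw [← Finset.sum_add_distrib]
    apply Finset.sum_congr rfl; intro k _; ring
  have hcs : |∑ k ∈ Fᶜ, xb i k * (wstar k - c k)|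
      ≤ Real.sqrt (∑ k ∈ Fᶜ, xb i k ^ 2) * r := by
    refine le_trans (abs_sum_le_sqrt _ _ _) ?_
    exact mul_le_mul_of_nonneg_left hball (Real.sqrt_nonneg _)
  have habs := abs_le.mp hcs
  constructor
  · intro hcond
    have hT : 1 - ∑ k ∈ Fᶜ, xb i k * wstar k < 0 := by
      rw [hdiff]; linarith [habs.1]
    rw [hθi]; unfold dell; rw [if_pos hT]
  · intro hcond
    have hT : γ < 1 - ∑ k ∈ Fᶜ, xb i k * wstar k := by
      rw [hdiff]; linarith [habs.2]
    rw [hθi]; unfold dell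
    rw [if_neg (by linarith : ¬ (1 - ∑ k ∈ Fᶜ, xb i k * wstar k) < 0),
      if_neg (by linarith : ¬ (1 - ∑ k ∈ Fᶜ, xb i k * wstar k) ≤ γ)]
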